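/- Let λ, μ be partitions with at most n parts. If λ is not contained in μ (i.e. λ_i > μ_i for some i), then the factorial Schur function satisfies s_λ(a_μ|a) = 0, where (a_μ)_i = a_{n+1−i+μ_i}. -/

import Mathlib

structure SSYT (n : ℕ) (lam : Fin n → ℕ) where
  entry : ∀ i : Fin n, Fin (lam i) → Fin n
  rowWeak : ∀ (i : Fin n) (j k : Fin (lam i)), j ≤ k → entry i j ≤ entry i k
  colStrict : ∀ (i i' : Fin n) (_ : i < i') (j : Fin (lam i')) (hj : (j : ℕ) < lam i),
    entry i ⟨j, hj⟩ < entry i' j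

instance (n : ℕ) (lam : Fin n → ℕ) : Finite (SSYT n lam) :=
  Finite.of_injective (fun T => T.entry) (fun T T' h => by cases T; cases T'; simpa using h)

noncomputable instance (n : ℕ) (lam : Fin n → ℕ) : Fintype (SSYT n lam) :=
  Fintype.ofFinite _

/-- The factorial Schur function `s_λ(x|a)`, as a sum over semistandard Young tableaux of
shape `λ` (rows indexed by `i : Fin n`, row `i` having cells `j : Fin (lam i)`) with entries
in `{1,…,n}` (encoded `0`-based as `Fin n`): the entry of cell `(i,j)` is `T.entry i j + 1`,
its content is `(j+1) - (i+1) = j - i`. -/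
noncomputable def facSchur (n : ℕ) (lam : Fin n → ℕ) {R : Type*} [CommRing R]
    (x : Fin n → R) (a : ℤ → R) : R :=
  ∑ T : SSYT n lam, ∏ i : Fin n, ∏ j : Fin (lam i),
    (x (T.entry i j) - a ((T.entry i j : ℤ) + 1 + (j : ℤ) - (i : ℤ)))

/-!
Because `λ` is a partition, `s_λ(x|a)` is symmetric in `x`, so it may be evaluated at the
reversed point `x_t = a_{t + μ_{n+1-t}}`. There the factor of a cell `(i, j)` with entry `t` is
`a_{t + μ_{n+1-t}} - a_{t + j - i}`, which vanishes when `μ_{n+1-t} = j - i`, and every tableau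
has such a cell. Otherwise, walking along the first row, `j - 1 < μ_{n+1-T(1,j)}` for every `j`;
if `λ_r > μ_r`, the entry `t = T(1, μ_r + 1)` then satisfies `n + 1 - t < r`, while column
strictness gives `T(r, μ_r + 1) ≥ t + r - 1 > n`.

For the symmetry, a tableau is the same as a flag `∅ = ρ_0 ⊂ ρ_1 ⊂ ⋯ ⊂ ρ_n = λ` of interlacing
partitions, and its weight factors level by level. Once every level but `ρ_k` is fixed, the rows
of `ρ_k` range independently over intervals. Summing over them gives a factor that telescopes,
across the rows, into a function symmetric in `x_k` and `x_{k+1}`, times one two-variable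
factorial complete function `h(x_k, x_{k+1})` per row. Each `h` is symmetric because
`(x - y) h(x, y) = ∏ (x - b_j) - ∏ (y - b_j)`.
-/

open Finset

section TwoVariable

variable {R : Type*} [CommRing R] (b : ℕ → R)

/-- The factorial complete symmetric function of degree `q - p` in the two variables `x, y`,
with shifts `b p, …, b q`. -/
def facH₂ (p q : ℕ) (x y : R) : R :=
  ∑ e ∈ Icc p q, (∏ j ∈ Ico p e, (x - b j)) * ∏ j ∈ Ioc e q, (y - b j)

theorem sub_mul_facH₂ (p q : ℕ) (x y : R) :
    (x - y) * facH₂ b p q x y = ∏ j ∈ Icc p q, (x - b j) - ∏ j ∈ Icc p q, (y - b j) := by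
  have h := prod_add_ordered (Icc p q) (fun j => y - b j) (fun _ => x - y)
  simp only [sub_add_sub_cancel'] at h
  rw [h, add_sub_cancel_left, facH₂, mul_sum]
  refine sum_congr rfl fun e he => ?_
  have he := mem_Icc.mp he
  have hlt : {j ∈ Icc p q | j < e} = Ico p e := by
    ext j; simp only [mem_filter, mem_Icc, mem_Ico]; omega
  have hgt : {j ∈ Icc p q | e < j} = Ioc e q := by
    ext j; simp only [mem_filter, mem_Icc, mem_Ioc]; omega
  rw [hlt, hgt, mul_assoc]

theorem facH₂_eq_prod_add_mul (p q : ℕ) (x y : R) (hpq : p ≤ q) :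
    facH₂ b p q x y = ∏ j ∈ Ioc p q, (y - b j) + (x - b p) * facH₂ b (p + 1) q x y := by
  rw [facH₂, ← insert_Icc_add_one_left_eq_Icc hpq, sum_insert (by simp), Ico_self, prod_empty,
    one_mul, facH₂, mul_sum]
  congr 1
  refine sum_congr rfl fun e he => ?_
  rw [← insert_Ico_add_one_left_eq_Ico (by simp at he; omega), prod_insert (by simp), mul_assoc]

theorem facH₂_comm (p q : ℕ) (x y : R) : facH₂ b p q x y = facH₂ b p q y x := by
  induction h : q - p generalizing p with
  | zero =>
    rcases (Nat.sub_eq_zero_iff_le.mp h).lt_or_eq with hlt | rfl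
    · simp [facH₂, Icc_eq_empty_of_lt hlt]
    · simp [facH₂]
  | succ d ih =>
    have hpq : p ≤ q := by omega
    have htel := sub_mul_facH₂ b (p + 1) q x y
    rw [Icc_add_one_left_eq_Ioc] at htel
    rw [facH₂_eq_prod_add_mul b p q x y hpq, facH₂_eq_prod_add_mul b p q y x hpq,
      ← ih (p + 1) (by omega)]
    linear_combination htel

theorem sum_Icc_prod_mul_prod_eq_mul_facH₂ (p q m M : ℕ) (x y : R) (hpm : p ≤ m) (hMq : M ≤ q) :
    ∑ e ∈ Icc m M, (∏ j ∈ Ico p e, (x - b j)) * ∏ j ∈ Ioc e q, (y - b j) =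
      (∏ j ∈ Ico p m, (x - b j)) * (∏ j ∈ Ioc M q, (y - b j)) * facH₂ b m M x y := by
  rw [facH₂, mul_sum]
  refine sum_congr rfl fun e he => ?_
  obtain ⟨hme, heM⟩ := mem_Icc.mp he
  rw [← prod_Ico_consecutive _ hpm hme, ← prod_Ioc_consecutive _ heM hMq]
  ring

end TwoVariable

theorem Finset.prod_Ico_add_one_eq_prod_Ioc {M : Type*} [CommMonoid M] (f : ℕ → M) (p q : ℕ) :
    ∏ j ∈ Ico p q, f (j + 1) = ∏ j ∈ Ioc p q, f j := by
  rw [prod_Ico_add', Ico_add_one_add_one_eq_Ioc]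

section Flags

variable {n : ℕ} {lam : Fin n → ℕ}

/-- `ρ m i` plays the role of the length of row `i` of the subtableau of entries `< m`
(entries being `0`-based). -/
structure IsFlag (lam : Fin n → ℕ) (ρ : Fin (n + 1) → Fin n → ℕ) : Prop where
  zero : ∀ i, ρ 0 i = 0
  last : ∀ i, ρ (Fin.last n) i = lam i
  le_succ : ∀ (m i : Fin n), ρ m.castSucc i ≤ ρ m.succ i
  interlace : ∀ (m : Fin n) {i i' : Fin n}, i < i' → ρ m.succ i' ≤ ρ m.castSucc i

namespace IsFlag

variable {ρ : Fin (n + 1) → Fin n → ℕ} (hρ : IsFlag lam ρ)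
include hρ

theorem monotone (i : Fin n) : Monotone (ρ · i) :=
  Fin.monotone_iff_le_succ.mpr fun m => hρ.le_succ m i

theorem le_lam (m : Fin (n + 1)) (i : Fin n) : ρ m i ≤ lam i :=
  hρ.last i ▸ hρ.monotone i (Fin.le_last m)

theorem antitone (m : Fin (n + 1)) : Antitone (ρ m) := by
  intro i i' hii'
  rcases hii'.lt_or_eq with hlt | rfl
  · cases m using Fin.cases with
    | zero => simp [hρ.zero]
    | succ m => exact (hρ.interlace m hlt).trans (hρ.le_succ m i)
  · rfl

end IsFlag

section Weight

variable {R : Type*} [CommRing R]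

def levelWeight (x : Fin n → R) (a : ℤ → R) (ρ : Fin (n + 1) → Fin n → ℕ) (m : Fin n) : R :=
  ∏ i, ∏ j ∈ Ico (ρ m.castSucc i) (ρ m.succ i), (x m - a ((m : ℤ) + 1 + (j : ℤ) - (i : ℤ)))

def flagWeight (x : Fin n → R) (a : ℤ → R) (ρ : Fin (n + 1) → Fin n → ℕ) : R :=
  ∏ m, levelWeight x a ρ m

end Weight

namespace SSYT

variable (T : SSYT n lam)

def flag (m : Fin (n + 1)) (i : Fin n) : ℕ := #{j : Fin (lam i) | (T.entry i j : ℕ) < m}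

variable {T}

theorem lt_flag_iff {m : Fin (n + 1)} {i : Fin n} (j : Fin (lam i)) :
    (j : ℕ) < T.flag m i ↔ (T.entry i j : ℕ) < m :=
  Fin.lt_card_filter_univ_iff_apply_of_imp _ fun _ _ h hj =>
    (Fin.le_def.mp (T.rowWeak i _ _ h)).trans_lt hj

theorem flag_le (m : Fin (n + 1)) (i : Fin n) : T.flag m i ≤ lam i :=
  (card_filter_le _ _).trans_eq (card_fin _)

theorem isFlag_flag (hlam : Antitone lam) : IsFlag lam T.flag where
  zero i := by simp [flag]
  last i := by simp [flag]
  le_succ m i := card_le_card fun j => by simp only [mem_filter]; grind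
  interlace m i i' hii' := by
    by_contra! h
    have hj : T.flag m.castSucc i < lam i' := h.trans_le (flag_le _ _)
    have hlt := (lt_flag_iff ⟨_, hj⟩).mp h
    have hcol := T.colStrict i i' hii' ⟨_, hj⟩ (hj.trans_le (hlam hii'.le))
    have := (lt_flag_iff (m := m.castSucc) _).mpr (Nat.lt_of_lt_of_le (Fin.lt_def.mp hcol)
      (by simp only [Fin.val_succ, Fin.val_castSucc] at hlt ⊢; omega))
    exact this.false

theorem map_filter_entry_eq_Ico (i m : Fin n) :
    ({j | T.entry i j = m} : Finset (Fin (lam i))).map Fin.valEmbedding =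
      Ico (T.flag m.castSucc i) (T.flag m.succ i) := by
  ext v
  simp only [mem_map, mem_filter, mem_univ, true_and, Fin.valEmbedding_apply, mem_Ico]
  constructor
  · rintro ⟨j, rfl, rfl⟩
    rw [← not_lt, lt_flag_iff, lt_flag_iff]
    simp
  · rintro ⟨hlo, hhi⟩
    have hv : v < lam i := hhi.trans_le (flag_le _ _)
    refine ⟨⟨v, hv⟩, ?_, rfl⟩
    have hlo := (lt_flag_iff (m := m.castSucc) ⟨v, hv⟩).not.mp (not_lt.mpr hlo)
    have hhi := (lt_flag_iff (m := m.succ) ⟨v, hv⟩).mp hhi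
    simp only [Fin.val_castSucc, Fin.val_succ, not_lt] at hlo hhi
    exact Fin.ext (by omega)

theorem prod_eq_flagWeight {R : Type*} [CommRing R] (x : Fin n → R) (a : ℤ → R) :
    ∏ i, ∏ j : Fin (lam i), (x (T.entry i j) - a ((T.entry i j : ℤ) + 1 + (j : ℤ) - (i : ℤ))) =
      flagWeight x a T.flag := by
  rw [flagWeight]
  unfold levelWeight
  rw [prod_comm]
  refine prod_congr rfl fun i _ => ?_
  rw [← prod_fiberwise univ (T.entry i)]
  refine prod_congr rfl fun m _ => ?_
  rw [← map_filter_entry_eq_Ico, prod_map]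
  refine prod_congr rfl fun j hj => ?_
  rw [(mem_filter.mp hj).2]
  rfl

theorem flag_injective : Function.Injective (flag : SSYT n lam → _) := by
  intro T T' h
  have hentry : ∀ i j, T.entry i j = T'.entry i j := fun i j => by
    have hm : ∀ m : Fin (n + 1), (T.entry i j : ℕ) < m ↔ (T'.entry i j : ℕ) < m := fun m => by
      rw [← lt_flag_iff, ← lt_flag_iff, h]
    have h1 := (hm (T.entry i j).succ).mp (by simp)
    have h2 := (hm (T'.entry i j).succ).mpr (by simp)
    simp only [Fin.val_succ] at h1 h2
    exact Fin.ext (by omega)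
  cases T
  cases T'
  congr
  funext i j
  exact hentry i j

end SSYT

def flagEntry (ρ : Fin (n + 1) → Fin n → ℕ) (i : Fin n) (j : ℕ) : ℕ :=
  #{m : Fin n | ρ m.succ i ≤ j}

namespace IsFlag

variable {ρ : Fin (n + 1) → Fin n → ℕ} (hρ : IsFlag lam ρ)
include hρ

theorem flagEntry_lt_iff {i : Fin n} {j : ℕ} (m : Fin (n + 1)) :
    flagEntry ρ i j < m ↔ j < ρ m i := by
  cases m using Fin.cases with
  | zero => simp [hρ.zero]
  | succ m =>
    rw [Fin.val_succ, Nat.lt_succ_iff, ← not_lt, flagEntry,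
      Fin.lt_card_filter_univ_iff_apply_of_imp _ fun _ _ h hm =>
        (hρ.monotone i (Fin.succ_le_succ_iff.mpr h)).trans hm, not_le]

theorem flagEntry_lt {i : Fin n} {j : ℕ} (hj : j < lam i) : flagEntry ρ i j < n := by
  simpa using (hρ.flagEntry_lt_iff (Fin.last n)).mpr (hρ.last i ▸ hj)

theorem flagEntry_lt_flagEntry {i i' : Fin n} (hii' : i < i') {j : ℕ} (hj : j < lam i') :
    flagEntry ρ i j < flagEntry ρ i' j := by
  let e : Fin n := ⟨_, hρ.flagEntry_lt hj⟩
  have he : j < ρ e.succ i' := (hρ.flagEntry_lt_iff e.succ).mp (by simp [e])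
  exact (hρ.flagEntry_lt_iff e.castSucc).mpr (he.trans_le (hρ.interlace e hii'))

def toSSYT : SSYT n lam where
  entry i j := ⟨flagEntry ρ i j, hρ.flagEntry_lt j.isLt⟩
  rowWeak i j k hjk := Fin.mk_le_mk.mpr <| card_le_card fun m => by
    simp only [mem_filter, mem_univ, true_and]
    exact fun hm => hm.trans hjk
  colStrict i i' hii' j _ := Fin.mk_lt_mk.mpr (hρ.flagEntry_lt_flagEntry hii' j.isLt)

theorem flag_toSSYT : hρ.toSSYT.flag = ρ := by
  funext m i
  simp only [SSYT.flag, toSSYT, hρ.flagEntry_lt_iff]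
  rw [Fin.card_filter_val_lt, min_eq_right (hρ.le_lam m i)]

end IsFlag

variable (n lam) in
noncomputable def flags : Finset (Fin (n + 1) → Fin n → ℕ) := univ.image (SSYT.flag (lam := lam))

theorem mem_flags (hlam : Antitone lam) {ρ : Fin (n + 1) → Fin n → ℕ} :
    ρ ∈ flags n lam ↔ IsFlag lam ρ := by
  simp only [flags, mem_image, mem_univ, true_and]
  exact ⟨fun ⟨T, hT⟩ => hT ▸ T.isFlag_flag hlam, fun hρ => ⟨hρ.toSSYT, hρ.flag_toSSYT⟩⟩

theorem facSchur_eq_sum_flagWeight {R : Type*} [CommRing R] (x : Fin n → R) (a : ℤ → R) :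
    facSchur n lam x a = ∑ ρ ∈ flags n lam, flagWeight x a ρ := by
  rw [flags, sum_image SSYT.flag_injective.injOn]
  exact sum_congr rfl fun T _ => T.prod_eq_flagWeight x a

end Flags

section AdjacentSwap

open Function

variable {n : ℕ} {lam : Fin (n + 1) → ℕ} {R : Type*} [CommRing R]

theorem Fin.castSucc_ne_castSucc_succ {u : Fin n} {m : Fin (n + 1)} (h : m ≠ u.succ) :
    m.castSucc ≠ u.castSucc.succ :=
  fun h' => h (Fin.castSucc_injective _ (h'.trans (Fin.succ_castSucc u)))

theorem Fin.succ_ne_castSucc_succ {u : Fin n} {m : Fin (n + 1)} (h : m ≠ u.castSucc) :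
    m.succ ≠ u.castSucc.succ :=
  fun h' => h (Fin.succ_injective _ h')

variable (u : Fin n) (ρ : Fin (n + 2) → Fin (n + 1) → ℕ)

/-- With every level of the flag `ρ` but the middle one `u.castSucc.succ` fixed, row `i` of the
middle level may take exactly the values in `[midLower u ρ i, midUpper u ρ i]`. -/
def midLower : Fin (n + 1) → ℕ :=
  Fin.lastCases (ρ u.castSucc.castSucc (Fin.last n))
    fun i => max (ρ u.castSucc.castSucc i.castSucc) (ρ u.succ.succ i.succ)

def midUpper : Fin (n + 1) → ℕ :=
  Fin.cases (ρ u.succ.succ 0) fun i => min (ρ u.succ.succ i.succ) (ρ u.castSucc.castSucc i.castSucc)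

def rowContent (a : ℤ → R) (i : Fin (n + 1)) (j : ℕ) : R := a ((u : ℤ) + 1 + j - i)

variable {u ρ}

theorem le_midLower_iff (hρ : IsFlag lam ρ) {i : Fin (n + 1)} {e : ℕ} :
    midLower u ρ i ≤ e ↔ ρ u.castSucc.castSucc i ≤ e ∧ ∀ i', i < i' → ρ u.succ.succ i' ≤ e := by
  cases i using Fin.lastCases with
  | last => simp [midLower, not_lt_of_ge (Fin.le_last _)]
  | cast i =>
    simp only [midLower, Fin.lastCases_castSucc, max_le_iff]
    refine and_congr_right fun _ => ⟨fun h i' hi' => (hρ.antitone _ ?_).trans h,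
      fun h => h _ Fin.castSucc_lt_succ⟩
    exact Fin.castSucc_lt_iff_succ_le.mp hi'

theorem midUpper_ge_iff (hρ : IsFlag lam ρ) {i : Fin (n + 1)} {e : ℕ} :
    e ≤ midUpper u ρ i ↔ e ≤ ρ u.succ.succ i ∧ ∀ i', i' < i → e ≤ ρ u.castSucc.castSucc i' := by
  cases i using Fin.cases with
  | zero => simp [midUpper]
  | succ i =>
    simp only [midUpper, Fin.cases_succ, le_min_iff]
    refine and_congr_right fun _ => ⟨fun h i' hi' => h.trans (hρ.antitone _ ?_),
      fun h => h _ Fin.castSucc_lt_succ⟩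
    exact Fin.le_castSucc_iff.mpr hi'

theorem isFlag_update_iff (hρ : IsFlag lam ρ) {κ : Fin (n + 1) → ℕ} :
    IsFlag lam (update ρ u.castSucc.succ κ) ↔
      ∀ i, κ i ∈ Icc (midLower u ρ i) (midUpper u ρ i) := by
  simp only [mem_Icc, le_midLower_iff hρ, midUpper_ge_iff hρ]
  have hlo : update ρ u.castSucc.succ κ u.castSucc.castSucc = ρ u.castSucc.castSucc :=
    update_of_ne (Fin.castSucc_ne_castSucc_succ Fin.castSucc_lt_succ.ne) _ _
  have hhi : update ρ u.castSucc.succ κ u.succ.succ = ρ u.succ.succ :=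
    update_of_ne (Fin.succ_ne_castSucc_succ Fin.castSucc_lt_succ.ne') _ _
  have hmid : update ρ u.castSucc.succ κ u.castSucc.succ = κ := update_self _ _ _
  constructor
  · intro h i
    refine ⟨⟨?_, fun i' hi' => ?_⟩, ?_, fun i' hi' => ?_⟩
    · simpa only [hlo, hmid] using h.le_succ u.castSucc i
    · simpa only [hhi, ← Fin.succ_castSucc, hmid] using h.interlace u.succ hi'
    · simpa only [hhi, ← Fin.succ_castSucc, hmid] using h.le_succ u.succ i
    · simpa only [hlo, hmid] using h.interlace u.castSucc hi'
  · intro h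
    refine ⟨fun i => ?_, fun i => ?_, fun m i => ?_, fun m i i' hii' => ?_⟩
    · rw [update_of_ne (Fin.succ_ne_zero _).symm]
      exact hρ.zero i
    · rw [update_of_ne (Fin.succ_castSucc u ▸ (Fin.castSucc_lt_last _).ne')]
      exact hρ.last i
    · rcases eq_or_ne m u.castSucc with rfl | h1
      · rw [hlo, hmid]; exact (h i).1.1
      rcases eq_or_ne m u.succ with rfl | h2
      · rw [hhi, ← Fin.succ_castSucc, hmid]; exact (h i).2.1
      rw [update_of_ne (Fin.castSucc_ne_castSucc_succ h2),
        update_of_ne (Fin.succ_ne_castSucc_succ h1)]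
      exact hρ.le_succ m i
    · rcases eq_or_ne m u.castSucc with rfl | h1
      · rw [hlo, hmid]; exact (h i').2.2 i hii'
      rcases eq_or_ne m u.succ with rfl | h2
      · rw [hhi, ← Fin.succ_castSucc, hmid]; exact (h i).1.2 i' hii'
      rw [update_of_ne (Fin.castSucc_ne_castSucc_succ h2),
        update_of_ne (Fin.succ_ne_castSucc_succ h1)]
      exact hρ.interlace m hii'

theorem sum_flags_update_eq (hlam : Antitone lam) (hρ : ρ ∈ flags (n + 1) lam)
    (f : (Fin (n + 2) → Fin (n + 1) → ℕ) → R) :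
    ∑ σ ∈ flags (n + 1) lam with update σ u.castSucc.succ 0 = update ρ u.castSucc.succ 0, f σ =
      ∑ κ ∈ Fintype.piFinset fun i => Icc (midLower u ρ i) (midUpper u ρ i),
        f (update ρ u.castSucc.succ κ) := by
  have hflag := (mem_flags hlam).mp hρ
  rw [← sum_image (f := f) (g := update ρ u.castSucc.succ) fun κ _ κ' _ h => by
    simpa using congrFun h u.castSucc.succ]
  refine sum_congr (Finset.ext fun σ => ?_) fun _ _ => rfl
  simp only [mem_filter, mem_image, Fintype.mem_piFinset, mem_flags hlam]
  constructor
  · rintro ⟨hσ, hforget⟩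
    have hσ_eq : update ρ u.castSucc.succ (σ u.castSucc.succ) = σ := by
      funext m
      rcases eq_or_ne m u.castSucc.succ with rfl | hm
      · exact update_self _ _ _
      · simpa [update_of_ne hm] using (congrFun hforget m).symm
    exact ⟨_, (isFlag_update_iff hflag).mp (by rwa [hσ_eq]), hσ_eq⟩
  · rintro ⟨κ, hκ, rfl⟩
    exact ⟨(isFlag_update_iff hflag).mpr hκ, update_idem _ _ _⟩

theorem flagWeight_update (x : Fin (n + 1) → R) (a : ℤ → R) (κ : Fin (n + 1) → ℕ) :
    flagWeight x a (update ρ u.castSucc.succ κ) =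
      (∏ m ∈ {u.castSucc, u.succ}ᶜ, levelWeight x a ρ m) *
        ∏ i, (∏ j ∈ Ico (ρ u.castSucc.castSucc i) (κ i), (x u.castSucc - rowContent u a i j)) *
          ∏ j ∈ Ioc (κ i) (ρ u.succ.succ i), (x u.succ - rowContent u a i j) := by
  rw [flagWeight, ← prod_compl_mul_prod {u.castSucc, u.succ}, prod_pair Fin.castSucc_lt_succ.ne]
  congr 1
  · refine prod_congr rfl fun m hm => ?_
    simp only [mem_compl, mem_insert, mem_singleton, not_or] at hm
    simp only [levelWeight, update_of_ne (Fin.castSucc_ne_castSucc_succ hm.2),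
      update_of_ne (Fin.succ_ne_castSucc_succ hm.1)]
  · rw [levelWeight, levelWeight, ← prod_mul_distrib]
    refine prod_congr rfl fun i _ => ?_
    rw [update_of_ne (Fin.castSucc_ne_castSucc_succ Fin.castSucc_lt_succ.ne), update_self,
      ← Fin.succ_castSucc, update_self,
      update_of_ne (Fin.succ_ne_castSucc_succ Fin.castSucc_lt_succ.ne'),
      ← prod_Ico_add_one_eq_prod_Ioc]
    congr 1
    refine prod_congr rfl fun j _ => ?_
    simp only [rowContent, Fin.val_succ]
    congr 2
    push_cast
    ring

theorem prod_prod_Ico_midLower_eq (a : ℤ → R) (y : R) :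
    ∏ i, ∏ j ∈ Ico (ρ u.castSucc.castSucc i) (midLower u ρ i), (y - rowContent u a i j) =
      ∏ i, ∏ j ∈ Ioc (midUpper u ρ i) (ρ u.succ.succ i), (y - rowContent u a i j) := by
  rw [Fin.prod_univ_castSucc, Fin.prod_univ_succ]
  simp only [midLower, midUpper, Fin.lastCases_last, Fin.lastCases_castSucc, Fin.cases_zero,
    Fin.cases_succ, Ico_self, Ioc_self, prod_empty, mul_one, one_mul]
  refine prod_congr rfl fun i _ => ?_
  have hIco : Ico (ρ u.castSucc.castSucc i.castSucc)
      (max (ρ u.castSucc.castSucc i.castSucc) (ρ u.succ.succ i.succ)) =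
      Ico (min (ρ u.succ.succ i.succ) (ρ u.castSucc.castSucc i.castSucc))
        (ρ u.succ.succ i.succ) := by
    ext j; simp only [mem_Ico]; omega
  rw [← prod_Ico_add_one_eq_prod_Ioc, hIco]
  refine prod_congr rfl fun j _ => ?_
  simp only [rowContent, Fin.val_castSucc, Fin.val_succ]
  congr 2
  push_cast
  ring

theorem prod_sum_Icc_midLower_midUpper_comm (hρ : IsFlag lam ρ) (a : ℤ → R) (y z : R) :
    ∏ i, ∑ e ∈ Icc (midLower u ρ i) (midUpper u ρ i),
        (∏ j ∈ Ico (ρ u.castSucc.castSucc i) e, (y - rowContent u a i j)) *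
          ∏ j ∈ Ioc e (ρ u.succ.succ i), (z - rowContent u a i j) =
      ∏ i, ∑ e ∈ Icc (midLower u ρ i) (midUpper u ρ i),
        (∏ j ∈ Ico (ρ u.castSucc.castSucc i) e, (z - rowContent u a i j)) *
          ∏ j ∈ Ioc e (ρ u.succ.succ i), (y - rowContent u a i j) := by
  have hfactor : ∀ y z : R, ∏ i, ∑ e ∈ Icc (midLower u ρ i) (midUpper u ρ i),
        (∏ j ∈ Ico (ρ u.castSucc.castSucc i) e, (y - rowContent u a i j)) *
          ∏ j ∈ Ioc e (ρ u.succ.succ i), (z - rowContent u a i j) =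
      (∏ i, ∏ j ∈ Ico (ρ u.castSucc.castSucc i) (midLower u ρ i), (y - rowContent u a i j)) *
        (∏ i, ∏ j ∈ Ioc (midUpper u ρ i) (ρ u.succ.succ i), (z - rowContent u a i j)) *
        ∏ i, facH₂ (rowContent u a i) (midLower u ρ i) (midUpper u ρ i) y z := fun y z => by
    rw [← prod_mul_distrib, ← prod_mul_distrib]
    exact prod_congr rfl fun i _ => sum_Icc_prod_mul_prod_eq_mul_facH₂ _ _ _ _ _ _ _
      ((le_midLower_iff hρ).mp le_rfl).1 ((midUpper_ge_iff hρ).mp le_rfl).1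
  simp only [hfactor, facH₂_comm _ _ _ y z, prod_prod_Ico_midLower_eq]
  ring

theorem sum_flagWeight_comp_swap (hlam : Antitone lam) (x : Fin (n + 1) → R) (a : ℤ → R) :
    ∑ ρ ∈ flags (n + 1) lam, flagWeight (x ∘ Equiv.swap u.castSucc u.succ) a ρ =
      ∑ ρ ∈ flags (n + 1) lam, flagWeight x a ρ := by
  let forget (σ : Fin (n + 2) → Fin (n + 1) → ℕ) := update σ u.castSucc.succ 0
  have hmaps : ∀ σ ∈ flags (n + 1) lam, forget σ ∈ (flags (n + 1) lam).image forget :=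
    fun σ => mem_image_of_mem forget
  rw [← sum_fiberwise_of_maps_to hmaps, ← sum_fiberwise_of_maps_to hmaps]
  refine sum_congr rfl fun d hd => ?_
  obtain ⟨ρ, hρ, rfl⟩ := mem_image.mp hd
  simp only [forget, sum_flags_update_eq hlam hρ, flagWeight_update, ← mul_sum]
  congr 1
  · refine prod_congr rfl fun m hm => ?_
    simp only [mem_compl, mem_insert, mem_singleton, not_or] at hm
    simp only [levelWeight, comp_apply, Equiv.swap_apply_of_ne_of_ne hm.1 hm.2]
  · have h := prod_sum_Icc_midLower_midUpper_comm (u := u) ((mem_flags hlam).mp hρ) a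
      (x u.succ) (x u.castSucc)
    rw [prod_univ_sum, prod_univ_sum] at h
    simpa only [comp_apply, Equiv.swap_apply_left, Equiv.swap_apply_right] using h

theorem facSchur_comp_swap (hlam : Antitone lam) (x : Fin (n + 1) → R) (a : ℤ → R) :
    facSchur (n + 1) lam (x ∘ Equiv.swap u.castSucc u.succ) a = facSchur (n + 1) lam x a := by
  rw [facSchur_eq_sum_flagWeight, facSchur_eq_sum_flagWeight, sum_flagWeight_comp_swap hlam]

end AdjacentSwap

theorem facSchur_comp_perm {n : ℕ} {lam : Fin n → ℕ} (hlam : Antitone lam) {R : Type*}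
    [CommRing R] (x : Fin n → R) (a : ℤ → R) (σ : Equiv.Perm (Fin n)) :
    facSchur n lam (x ∘ σ) a = facSchur n lam x a := by
  cases n with
  | zero => rw [Subsingleton.elim (x ∘ σ) x]
  | succ n =>
    induction (Equiv.Perm.mclosure_swap_castSucc_succ n).ge (Submonoid.mem_top σ)
      using Submonoid.closure_induction generalizing x with
    | mem _ h =>
      obtain ⟨u, rfl⟩ := h
      exact facSchur_comp_swap hlam x a
    | one => rfl
    | mul σ τ _ _ hσ hτ => rw [Equiv.Perm.coe_mul, ← Function.comp_assoc, hτ, hσ]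

namespace SSYT

variable {n : ℕ} {lam : Fin n → ℕ} (T : SSYT n lam)

theorem entry_add_le_entry (hlam : Antitone lam) {i i' : Fin n} (hii' : i ≤ i') {j : ℕ}
    (hj : j < lam i') :
    (T.entry i ⟨j, hj.trans_le (hlam hii')⟩ : ℕ) + (i' - i) ≤ T.entry i' ⟨j, hj⟩ := by
  obtain ⟨d, hd⟩ : ∃ d, (i' : ℕ) = i + d := ⟨i' - i, by omega⟩
  induction d generalizing i' with
  | zero => obtain rfl : i = i' := Fin.ext (by omega); simp
  | succ d ih =>
    let i'' : Fin n := ⟨i + d, by omega⟩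
    have hi'' : i'' < i' := Fin.lt_def.mpr (by simp [i'']; omega)
    have hcol := Fin.lt_def.mp (T.colStrict i'' i' hi'' ⟨j, hj⟩ (hj.trans_le (hlam hi''.le)))
    have := ih (i' := i'') (Fin.le_def.mpr (by simp [i''])) (hj.trans_le (hlam hi''.le)) rfl
    simp only [i''] at hcol this ⊢
    omega

theorem content_lt_of_ne {mu : Fin n → ℕ} (hmu : Antitone mu)
    (hne : ∀ i j, (mu (Fin.rev (T.entry i j)) : ℤ) ≠ j - i) (i : Fin n) (j : ℕ) (hj : j < lam i) :
    (j : ℤ) - i < mu (Fin.rev (T.entry i ⟨j, hj⟩)) := by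
  induction j with
  | zero =>
    have := hne i ⟨0, hj⟩
    simp only [CharP.cast_eq_zero] at this ⊢
    omega
  | succ j ih =>
    have hrow := hmu (Fin.rev_le_rev.mpr (T.rowWeak i ⟨j, by omega⟩ ⟨j + 1, hj⟩ (by simp)))
    have := hne i ⟨j + 1, hj⟩
    have := ih (by omega)
    push_cast at *
    omega

theorem exists_content_eq (hlam : Antitone lam) {mu : Fin n → ℕ} (hmu : Antitone mu) {r : Fin n}
    (hr : mu r < lam r) : ∃ i j, (mu (Fin.rev (T.entry i j)) : ℤ) = j - i := by
  by_contra! hne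
  have : NeZero n := ⟨r.pos.ne'⟩
  have hj₀ : mu r < lam 0 := hr.trans_le (hlam (Fin.zero_le r))
  have htop := T.content_lt_of_ne hmu hne 0 (mu r) hj₀
  have hrev : Fin.rev (T.entry 0 ⟨mu r, hj₀⟩) < r := by
    by_contra! h
    have := hmu h
    simp only [Fin.val_zero, CharP.cast_eq_zero, sub_zero] at htop
    omega
  have hcol := T.entry_add_le_entry hlam (Fin.zero_le r) hr
  have := (T.entry r ⟨mu r, hr⟩).isLt
  rw [Fin.lt_def, Fin.val_rev] at hrev
  simp only [Fin.val_zero] at hcol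
  omega

end SSYT

theorem stmt2 (n : ℕ) (lam mu : Fin n → ℕ) (hlam : Antitone lam) (hmu : Antitone mu)
    (hnotsub : ¬ ∀ i : Fin n, lam i ≤ mu i)
    {R : Type*} [CommRing R] (a : ℤ → R) :
    facSchur n lam (fun i => a ((n : ℤ) - (i : ℕ) + mu i)) a = 0 := by
  obtain ⟨r, hr⟩ := not_forall.mp hnotsub
  rw [← facSchur_comp_perm hlam _ a Fin.revPerm, facSchur]
  refine sum_eq_zero fun T _ => ?_
  obtain ⟨i, j, hij⟩ := T.exists_content_eq hlam hmu (not_le.mp hr)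
  refine prod_eq_zero (mem_univ i) (prod_eq_zero (mem_univ j) (sub_eq_zero.mpr (congrArg a ?_)))
  have := (T.entry i j).isLt
  simp only [Fin.revPerm_apply, Fin.val_rev]
  omega
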